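/- arXiv:2601.16249 — 4 statements merged into one kernel-verified Lean document; each statement's English description precedes it below -/
import Mathlib

section
/- Leaf identifiability (Theorem 1, converse direction): under the same setup, if i ∈ [d] satisfies b(i) ≥ b(j) for all j ∈ [d] (i.e., i is an argmax of b), then i must be a leaf of G. -/
/-- Leaf identifiability (converse direction): under the same setup as the
forward direction, any argmax of `b` over the nodes must be a leaf of `G`. -/
theorem leaf_identifiability_converse (d : ℕ)
    (E : Fin d → Fin d → Prop)
    (hacyclic : ∀ v : Fin d, ¬ Relation.TransGen E v v)
    (a b : Fin d → ℝ)
    (hmono : ∀ i j : Fin d, E i j → a i ≤ a j)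
    (hnonleaf : ∀ i : Fin d, (∃ j, E i j) → b i < a i)
    (hleaf : ∀ l : Fin d, (∀ j, ¬ E l j) → b l = a l)
    (i : Fin d) (hargmax : ∀ j : Fin d, b j ≤ b i) :
    ∀ w : Fin d, ¬ E i w := by
  -- flip (TransGen E) is well-founded since it is transitive, irreflexive, finite
  have hwf : WellFounded (fun x y : Fin d => Relation.TransGen E y x) := by
    have : IsIrrefl (Fin d) (fun x y => Relation.TransGen E y x) := ⟨hacyclic⟩
    have : IsTrans (Fin d) (fun x y => Relation.TransGen E y x) :=
      ⟨fun x y z h1 h2 => h2.trans h1⟩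
    exact Finite.wellFounded_of_trans_of_irrefl _
  have hwfE : WellFounded (fun x y : Fin d => E y x) :=
    Subrelation.wf (fun h => Relation.TransGen.single h) hwf
  -- every node has a leaf descendant
  have hdesc : ∀ x : Fin d, ∃ l, Relation.ReflTransGen E x l ∧ ∀ j, ¬ E l j := by
    intro x
    induction x using hwfE.induction with
    | _ x ih =>
      by_cases h : ∃ j, E x j
      · obtain ⟨j, hj⟩ := h
        obtain ⟨l, hl, hleaf'⟩ := ih j hj
        exact ⟨l, Relation.ReflTransGen.head hj hl, hleaf'⟩
      · exact ⟨x, Relation.ReflTransGen.refl, fun j hj => h ⟨j, hj⟩⟩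
  intro w hw
  obtain ⟨l, hl, hlleaf⟩ := hdesc i
  have hai : a i ≤ a l := by
    clear hlleaf
    induction hl with
    | refl => exact le_refl _
    | tail h1 h2 ih => exact le_trans ih (hmono _ _ h2)
  have : b i < b l := by
    have := hnonleaf i ⟨w, hw⟩
    have := hleaf l hlleaf
    linarith
  exact absurd (hargmax l) (not_le.mpr this)
end

section
/- The topological divergence lower-bounds structural error: for any permutation π and any DAG estimate Ĝ whose edges are all consistent with π (i.e., every edge (i,j) of Ĝ satisfies π(i) < π(j)), the structural Hamming distance between Ĝ and the true DAG with adjacency A is at least D_top(π, A). -/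
open Finset

/-- Topological divergence lower-bounds structural error: if every edge of the
DAG estimate `B` is consistent with the permutation `π`, then the structural
Hamming distance between `B` and the true DAG `A` is at least `D_top(π, A)`,
the number of true edges placed backwards by `π`. -/
theorem dtop_le_shd (d : ℕ)
    (A B : Fin d → Fin d → Bool)
    (hacyclic : ∀ v : Fin d, ¬ Relation.TransGen (fun i j => A i j = true) v v)
    (π : Equiv.Perm (Fin d))
    (hconsistent : ∀ i j : Fin d, B i j = true → π i < π j) :
    (Finset.univ.filter
        (fun p : Fin d × Fin d => A p.1 p.2 = true ∧ π p.2 < π p.1)).card ≤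
      (Finset.univ.filter
        (fun p : Fin d × Fin d => p.1 < p.2 ∧
          (A p.1 p.2, A p.2 p.1) ≠ (B p.1 p.2, B p.2 p.1))).card := by
  apply Finset.card_le_card_of_injOn
    (fun p : Fin d × Fin d => if p.1 < p.2 then p else (p.2, p.1))
  · intro p hp
    simp only [Finset.mem_coe, Finset.mem_filter, Finset.mem_univ, true_and] at hp ⊢
    obtain ⟨hA, hπ⟩ := hp
    have hne : p.1 ≠ p.2 := by
      intro h
      exact hacyclic p.2 (Relation.TransGen.single (h ▸ hA))
    have hB : B p.1 p.2 = false := by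
      cases hb : B p.1 p.2 with
      | false => rfl
      | true => exact absurd (hconsistent _ _ hb) (not_lt.mpr hπ.le)
    by_cases hlt : p.1 < p.2
    · simp only [if_pos hlt]
      refine ⟨hlt, fun h => ?_⟩
      have := congrArg Prod.fst h
      simp [hA, hB] at this
    · simp only [if_neg hlt]
      refine ⟨lt_of_le_of_ne (not_lt.mp hlt) hne.symm, fun h => ?_⟩
      have := congrArg Prod.snd h
      simp [hA, hB] at this
  · intro p hp q hq hfq
    have hpπ : π p.2 < π p.1 :=
      (Finset.mem_filter.mp (Finset.mem_coe.mp hp)).2.2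
    have hqπ : π q.2 < π q.1 :=
      (Finset.mem_filter.mp (Finset.mem_coe.mp hq)).2.2
    simp only at hfq
    split_ifs at hfq with hp1 hq1 hq1
    · exact hfq
    · exfalso
      have h1 : p.1 = q.2 := congrArg Prod.fst hfq
      have h2 : p.2 = q.1 := congrArg Prod.snd hfq
      rw [h1, h2] at hpπ
      exact absurd hqπ (not_lt.mpr hpπ.le)
    · exfalso
      have h1 : p.2 = q.1 := congrArg Prod.fst hfq
      have h2 : p.1 = q.2 := congrArg Prod.snd hfq
      rw [h1, h2] at hpπ
      exact absurd hqπ (not_lt.mpr hpπ.le)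
    · have h1 : p.2 = q.2 := congrArg Prod.fst hfq
      have h2 : p.1 = q.1 := congrArg Prod.snd hfq
      exact Prod.ext h2 h1
end

section
/- Expected entropy of a symmetric Dirichlet: if a probability vector p = (p_1,...,p_n) is distributed as Dirichlet(s/n, ..., s/n) with total concentration s > 0, then E[H(p)] = ψ(s + 1) − ψ(s/n + 1), where H is Shannon entropy and ψ is the digamma function. -/
open MeasureTheory ProbabilityTheory Finset

open Real Set
open scoped ENNReal NNReal

-- L0
lemma lint_gamma {a r : ℝ} (ha : 0 < a) (hr : 0 < r) :
    ∫⁻ x in Ioi (0:ℝ), ENNReal.ofReal (x ^ (a-1) * Real.exp (-(r * x))) =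
      ENNReal.ofReal (Real.Gamma a / r ^ a) := by
  have hint : IntegrableOn (fun x : ℝ => x ^ (a-1) * Real.exp (-(r * x))) (Ioi 0) := by
    have h0 := Real.GammaIntegral_convergent ha
    have h1 : IntegrableOn (fun x : ℝ => Real.exp (-(r*x)) * (r*x) ^ (a-1)) (Ioi 0) := by
      have := (integrableOn_Ioi_comp_mul_left_iff
        (fun x : ℝ => Real.exp (-x) * x ^ (a-1)) 0 hr).mpr (by simpa using h0)
      simpa using this
    have h2 : IntegrableOn (fun x : ℝ => ((r:ℝ) ^ (a-1))⁻¹ * (Real.exp (-(r*x)) * (r*x) ^ (a-1))) (Ioi 0) := h1.const_mul _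
    apply h2.congr_fun ?_ measurableSet_Ioi
    intro x hx
    simp only
    rw [Real.mul_rpow hr.le (le_of_lt hx)]
    field_simp [(Real.rpow_pos_of_pos hr (a-1)).ne']
  rw [← MeasureTheory.ofReal_integral_eq_lintegral_ofReal hint]
  · rw [integral_rpow_mul_exp_neg_mul_Ioi ha hr]
    congr 1
    rw [Real.div_rpow zero_le_one hr.le, Real.one_rpow]
    field_simp
  · filter_upwards [self_mem_ae_restrict (measurableSet_Ioi : MeasurableSet (Ioi (0:ℝ)))] with x hx
    have : (0:ℝ) < x := hx
    positivity

lemma meas_G {a c : ℝ} : Measurable (Function.uncurry (fun t u : ℝ =>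
    ENNReal.ofReal (t ^ (a-1) * (u ^ (a+c-1) * Real.exp (-((1+t) * u)))))) := by
  apply Measurable.ennreal_ofReal
  exact (measurable_fst.pow_const _).mul
    ((measurable_snd.pow_const _).mul
      (((measurable_const.add measurable_fst).mul measurable_snd).neg.exp))

lemma lint_beta {a c : ℝ} (ha : 0 < a) (hc : 0 < c) :
    ∫⁻ t in Ioi (0:ℝ), ENNReal.ofReal (t ^ (a-1) * ((1+t) ^ (a+c))⁻¹) =
      ENNReal.ofReal (Real.Gamma a * Real.Gamma c / Real.Gamma (a+c)) := by
  set G : ℝ → ℝ → ℝ≥0∞ := fun t u =>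
    ENNReal.ofReal (t ^ (a-1) * (u ^ (a+c-1) * Real.exp (-((1+t) * u)))) with hG
  have hac : 0 < a + c := by linarith
  have hΓac : 0 < Real.Gamma (a+c) := Real.Gamma_pos_of_pos hac
  have key : (∫⁻ t in Ioi (0:ℝ), ENNReal.ofReal (t ^ (a-1) * ((1+t) ^ (a+c))⁻¹)) *
      ENNReal.ofReal (Real.Gamma (a+c)) = ENNReal.ofReal (Real.Gamma a * Real.Gamma c) := by
    rw [← lintegral_mul_const' _ _ ENNReal.ofReal_ne_top]
    calc ∫⁻ t in Ioi (0:ℝ), ENNReal.ofReal (t ^ (a-1) * ((1+t) ^ (a+c))⁻¹) *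
            ENNReal.ofReal (Real.Gamma (a+c))
        = ∫⁻ t in Ioi (0:ℝ), ∫⁻ u in Ioi (0:ℝ), G t u := by
          refine setLIntegral_congr_fun_ae measurableSet_Ioi (ae_of_all _ fun t ht => ?_)
          have ht' : (0:ℝ) < t := ht
          have h1t : (0:ℝ) < 1 + t := by linarith
          have : ∫⁻ u in Ioi (0:ℝ), G t u =
              ENNReal.ofReal (t ^ (a-1)) *
                ∫⁻ u in Ioi (0:ℝ), ENNReal.ofReal (u ^ (a+c-1) * Real.exp (-((1+t) * u))) := by
            rw [← lintegral_const_mul' _ _ ENNReal.ofReal_ne_top]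
            refine setLIntegral_congr_fun_ae measurableSet_Ioi (ae_of_all _ fun u hu => ?_)
            rw [hG, ← ENNReal.ofReal_mul (by positivity)]
          rw [this, lint_gamma hac h1t, ← ENNReal.ofReal_mul (by positivity),
            ← ENNReal.ofReal_mul (by positivity)]
          congr 1
          rw [div_eq_mul_inv]
          ring
      _ = ∫⁻ u in Ioi (0:ℝ), ∫⁻ t in Ioi (0:ℝ), G t u := by
          rw [lintegral_lintegral_swap]
          exact meas_G.aemeasurable
      _ = ENNReal.ofReal (Real.Gamma a * Real.Gamma c) := by
          have step : ∀ u ∈ Ioi (0:ℝ), (∫⁻ t in Ioi (0:ℝ), G t u) =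
              ENNReal.ofReal (Real.Gamma a) * ENNReal.ofReal (u ^ (c-1) * Real.exp (-u)) := by
            intro u hu
            have hu' : (0:ℝ) < u := hu
            have : ∀ t ∈ Ioi (0:ℝ), G t u =
                ENNReal.ofReal (t ^ (a-1) * Real.exp (-(u * t))) *
                  ENNReal.ofReal (u ^ (a+c-1) * Real.exp (-u)) := by
              intro t ht
              have ht' : (0:ℝ) < t := ht
              simp only [hG]
              rw [← ENNReal.ofReal_mul (by positivity)]
              congr 1
              rw [show -((1+t) * u) = -u + -(u*t) by ring, Real.exp_add]
              ring
            rw [setLIntegral_congr_fun_ae measurableSet_Ioi (ae_of_all _ this),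
              lintegral_mul_const' _ _ ENNReal.ofReal_ne_top, lint_gamma ha hu',
              ← ENNReal.ofReal_mul (by positivity), ← ENNReal.ofReal_mul (by positivity)]
            congr 1
            have : u ^ (a+c-1) = u ^ (c-1) * u ^ a := by
              rw [← Real.rpow_add hu']; ring_nf
            rw [this]
            field_simp [(Real.rpow_pos_of_pos hu' a).ne']
          rw [setLIntegral_congr_fun_ae measurableSet_Ioi (ae_of_all _ step),
            lintegral_const_mul' _ _ ENNReal.ofReal_ne_top]
          have : ∫⁻ u in Ioi (0:ℝ), ENNReal.ofReal (u ^ (c-1) * Real.exp (-u)) =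
              ENNReal.ofReal (Real.Gamma c) := by
            have := lint_gamma hc one_pos
            simp only [one_mul, Real.rpow_one, Real.one_rpow, div_one] at this
            exact this
          rw [this, ← ENNReal.ofReal_mul (Real.Gamma_nonneg_of_nonneg ha.le)]
  have h1 : ENNReal.ofReal (Real.Gamma (a+c)) ≠ 0 := by
    simp [hΓac, not_le]
  rw [mul_comm] at key
  rw [← ENNReal.eq_div_iff h1 ENNReal.ofReal_ne_top] at key
  rw [key, ENNReal.ofReal_div_of_pos hΓac]

lemma gammaPDF_meas (α r : ℝ) : Measurable (gammaPDF α r) :=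
  (measurable_gammaPDFReal α r).ennreal_ofReal

-- L1: moment of the gamma distribution
lemma lint_moment {α : ℝ} (hα : 0 < α) {c : ℝ} (hc : 0 < α + c) {t : ℝ} (ht : 0 ≤ t) :
    ∫⁻ x, ENNReal.ofReal (x ^ c * Real.exp (-(t * x))) ∂(gammaMeasure α 1) =
      ENNReal.ofReal (Real.Gamma (α+c) / (Real.Gamma α * (1+t) ^ (α+c))) := by
  have h1t : (0:ℝ) < 1 + t := by linarith
  rw [gammaMeasure, lintegral_withDensity_eq_lintegral_mul _ (gammaPDF_meas α 1)
    (show Measurable fun x : ℝ => ENNReal.ofReal (x ^ c * Real.exp (-(t * x))) from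
      ((measurable_id'.pow_const c).mul ((measurable_id'.const_mul t).neg.exp)).ennreal_ofReal)]
  simp only [Pi.mul_apply]
  have hsplit := lintegral_add_compl (μ := (volume : Measure ℝ))
    (fun x : ℝ => gammaPDF α 1 x * ENNReal.ofReal (x ^ c * Real.exp (-(t * x))))
    (measurableSet_Ioi (a := (0:ℝ)))
  rw [← hsplit]
  have hIoi : ∫⁻ x in Ioi (0:ℝ), gammaPDF α 1 x * ENNReal.ofReal (x ^ c * Real.exp (-(t * x))) =
      ENNReal.ofReal ((Real.Gamma α)⁻¹) *
        ∫⁻ x in Ioi (0:ℝ), ENNReal.ofReal (x ^ (α + c - 1) * Real.exp (-((1+t) * x))) := by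
    rw [← lintegral_const_mul' _ _ ENNReal.ofReal_ne_top]
    refine setLIntegral_congr_fun_ae measurableSet_Ioi (ae_of_all _ fun x hx => ?_)
    have hx' : (0:ℝ) < x := hx
    rw [gammaPDF_of_nonneg hx'.le, ← ENNReal.ofReal_mul (by positivity),
      ← ENNReal.ofReal_mul (by positivity)]
    congr 1
    rw [Real.one_rpow, show x ^ (α + c - 1) = x ^ (α - 1) * x ^ c by
      rw [← Real.rpow_add hx']; ring_nf]
    rw [show -((1+t) * x) = -(1 * x) + -(t * x) by ring, Real.exp_add]
    ring
  have hcompl : ∫⁻ x in (Ioi (0:ℝ))ᶜ,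
      gammaPDF α 1 x * ENNReal.ofReal (x ^ c * Real.exp (-(t * x))) = 0 := by
    rw [compl_Ioi]
    have h0 : ∫⁻ x in Iio (0:ℝ),
        gammaPDF α 1 x * ENNReal.ofReal (x ^ c * Real.exp (-(t * x))) = 0 := by
      rw [setLIntegral_congr_fun_ae measurableSet_Iio
        (ae_of_all _ fun x (hx : x < 0) => by rw [gammaPDF_of_neg hx, zero_mul]),
        lintegral_zero]
    rw [lintegral_Iic_eq_lintegral_Iio_add_Icc _ le_rfl, h0, zero_add, Set.Icc_self]
    exact setLIntegral_measure_zero _ _ (by simp)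
  rw [hIoi, hcompl, add_zero, lint_gamma hc h1t, ← ENNReal.ofReal_mul (by positivity)]
  congr 1
  rw [div_eq_mul_inv, div_eq_mul_inv, mul_inv]
  ring

-- L2: lintegral of a product over a pi measure
lemma lintegral_pi_prod : ∀ (n : ℕ) (μ : Measure ℝ) [SigmaFinite μ]
    (f : Fin n → ℝ → ℝ≥0∞) (_ : ∀ i, Measurable (f i)),
    ∫⁻ g : Fin n → ℝ, ∏ i, f i (g i) ∂(Measure.pi fun _ => μ) = ∏ i, ∫⁻ x, f i x ∂μ := by
  intro n
  induction n with
  | zero =>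
      intro μ _ f hf
      simp [lintegral_const, Measure.pi_empty_univ]
  | succ n ih =>
      intro μ _ f hf
      have hmp := (measurePreserving_piFinSuccAbove (fun _ : Fin (n+1) => μ) 0).symm
      have hF : Measurable (fun g : Fin (n+1) → ℝ => ∏ i, f i (g i)) :=
        Finset.measurable_prod _ fun i _ => (hf i).comp (measurable_pi_apply i)
      rw [← hmp.map_eq, lintegral_map hF hmp.measurable]
      simp_rw [MeasurableEquiv.piFinSuccAbove_symm_apply, Fin.insertNthEquiv,
        Fin.prod_univ_succ, Fin.insertNth_zero]
      simp only [Fin.zero_succAbove, cast_eq, Equiv.coe_fn_mk, Fin.cons_zero, Fin.cons_succ]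
      have hswap := lintegral_prod_mul (μ := μ) (ν := Measure.pi fun _ : Fin n => μ)
        (f := f 0) (g := fun y : Fin n → ℝ => ∏ i, f i.succ (y i))
        (hf 0).aemeasurable
        (Finset.measurable_prod _ fun i _ => (hf i.succ).comp (measurable_pi_apply i)).aemeasurable
      rw [hswap, ih μ (fun i => f i.succ) (fun i => hf i.succ)]

-- L3: a.e. positivity
lemma gamma_ae_pos {α : ℝ} : ∀ᵐ x ∂(gammaMeasure α 1), 0 < x := by
  rw [ae_iff]
  have h : {x : ℝ | ¬ 0 < x} = Set.Iic 0 := by ext x; simp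
  rw [h, gammaMeasure, withDensity_apply _ measurableSet_Iic,
    lintegral_Iic_eq_lintegral_Iio_add_Icc _ le_rfl,
    lintegral_gammaPDF_of_nonpos le_rfl, zero_add, Set.Icc_self]
  exact setLIntegral_measure_zero _ _ (by simp)

lemma pi_gamma_ae_pos {n : ℕ} {α : ℝ} (hα : 0 < α) :
    ∀ᵐ g ∂(Measure.pi fun _ : Fin n => gammaMeasure α 1), ∀ i, 0 < g i := by
  have : IsProbabilityMeasure (gammaMeasure α 1) := isProbabilityMeasure_gammaMeasure hα one_pos
  rw [ae_all_iff]
  intro i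
  rw [ae_iff]
  have h : {g : Fin n → ℝ | ¬ 0 < g i} = (fun g : Fin n → ℝ => g i) ⁻¹' (Set.Iic 0) := by
    ext g; simp
  rw [h]
  refine Measure.pi_eval_preimage_null _ ?_
  have h2 := @gamma_ae_pos α
  rw [ae_iff] at h2
  convert h2 using 2
  ext x; simp

-- L4: moment formula
lemma K_formula {n : ℕ} {α : ℝ} (hα : 0 < α) (k : Fin n) {a : ℝ} (ha : 0 < a) :
    ∫ g : Fin n → ℝ, (g k / ∑ j, g j) ^ a
        ∂(Measure.pi fun _ : Fin n => gammaMeasure α 1) =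
      Real.Gamma (α + a) * Real.Gamma (n * α) /
        (Real.Gamma α * Real.Gamma (n * α + a)) := by
  have : IsProbabilityMeasure (gammaMeasure α 1) := isProbabilityMeasure_gammaMeasure hα one_pos
  set μ := gammaMeasure α 1 with hμ
  set Pm : Measure (Fin n → ℝ) := Measure.pi fun _ : Fin n => μ with hPm
  have hn : 0 < n := k.pos
  have hnα : 0 < (n:ℝ) * α := by
    have : (0:ℝ) < n := Nat.cast_pos.mpr hn
    positivity
  have hΓa : 0 < Real.Gamma a := Real.Gamma_pos_of_pos ha
  have hneg : ∀ (x:ℝ), 0 < x → ∀ m:ℕ, x ≠ -(m:ℝ) := by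
    intro x hx m hcon
    have h0 : (0:ℝ) ≤ (m:ℝ) := Nat.cast_nonneg m
    rw [hcon] at hx
    linarith
  have hΓα : 0 < Real.Gamma α := Real.Gamma_pos_of_pos hα
  have hae : ∀ᵐ g ∂Pm, ∀ i, 0 < g i := pi_gamma_ae_pos hα
  have hSpos : ∀ g : Fin n → ℝ, (∀ i, 0 < g i) → 0 < ∑ j, g j := fun g hg =>
    Finset.sum_pos (fun j _ => hg j) ⟨k, mem_univ k⟩
  have hSmeas : Measurable (fun g : Fin n → ℝ => ∑ j, g j) :=
    Finset.measurable_sum _ fun j _ => measurable_pi_apply j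
  have hPmeas : Measurable (fun g : Fin n → ℝ => (g k / ∑ j, g j) ^ a) :=
    ((measurable_pi_apply k).div hSmeas).pow_const a
  rw [integral_eq_lintegral_of_nonneg_ae
    (by filter_upwards [hae] with g hg
        exact (Real.rpow_pos_of_pos (div_pos (hg k) (hSpos g hg)) a).le)
    hPmeas.aestronglyMeasurable]
  have key : ∫⁻ g, ENNReal.ofReal ((g k / ∑ j, g j) ^ a) ∂Pm =
      ENNReal.ofReal (Real.Gamma (α + a) * Real.Gamma (n * α) /
        (Real.Gamma α * Real.Gamma (n * α + a))) := by
    set H : (Fin n → ℝ) → ℝ → ℝ≥0∞ := fun g t =>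
      ENNReal.ofReal (t ^ (a-1) * (g k ^ a * Real.exp (-(t * ∑ j, g j)))) with hH
    have hHmeas : Measurable (Function.uncurry H) := by
      apply Measurable.ennreal_ofReal
      exact (measurable_snd.pow_const _).mul
        ((((measurable_pi_apply k).comp measurable_fst).pow_const _).mul
          ((measurable_snd.mul (hSmeas.comp measurable_fst)).neg.exp))
    have key2 : (∫⁻ g, ENNReal.ofReal ((g k / ∑ j, g j) ^ a) ∂Pm) *
        ENNReal.ofReal (Real.Gamma a) =
        ENNReal.ofReal (Real.Gamma (α+a) / Real.Gamma α) *
          ENNReal.ofReal (Real.Gamma a * Real.Gamma ((n:ℝ)*α) /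
            Real.Gamma (a + (n:ℝ)*α)) := by
      calc (∫⁻ g, ENNReal.ofReal ((g k / ∑ j, g j) ^ a) ∂Pm) * ENNReal.ofReal (Real.Gamma a)
          = ∫⁻ g, (∫⁻ t in Ioi (0:ℝ), H g t) ∂Pm := by
            rw [← lintegral_mul_const' _ _ ENNReal.ofReal_ne_top]
            refine lintegral_congr_ae ?_
            filter_upwards [hae] with g hg
            have hS : 0 < ∑ j, g j := hSpos g hg
            have hgk := hg k
            have inner : ∫⁻ t in Ioi (0:ℝ), H g t =
                ENNReal.ofReal (g k ^ a) *
                  ENNReal.ofReal (Real.Gamma a / (∑ j, g j) ^ a) := by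
              rw [← lint_gamma ha hS, ← lintegral_const_mul' _ _ ENNReal.ofReal_ne_top]
              refine setLIntegral_congr_fun_ae measurableSet_Ioi (ae_of_all _ fun t ht => ?_)
              have ht' : (0:ℝ) < t := ht
              simp only [hH]
              rw [← ENNReal.ofReal_mul (by positivity)]
              congr 1
              rw [show -(t * ∑ j, g j) = -((∑ j, g j) * t) by ring]
              ring
            rw [inner, ← ENNReal.ofReal_mul (by positivity),
              ← ENNReal.ofReal_mul (by positivity)]
            congr 1
            rw [Real.div_rpow hgk.le hS.le]
            field_simp
        _ = ∫⁻ t in Ioi (0:ℝ), (∫⁻ g, H g t ∂Pm) := lintegral_lintegral_swap hHmeas.aemeasurable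
        _ = ∫⁻ t in Ioi (0:ℝ), ENNReal.ofReal (Real.Gamma (α+a) / Real.Gamma α) *
              ENNReal.ofReal (t ^ (a-1) * ((1+t) ^ (a + (n:ℝ)*α))⁻¹) := by
            refine setLIntegral_congr_fun_ae measurableSet_Ioi (ae_of_all _ fun t ht => ?_)
            have ht' : (0:ℝ) < t := ht
            have h1t : (0:ℝ) < 1 + t := by linarith
            set F : Fin n → ℝ → ℝ≥0∞ := fun i x =>
              ENNReal.ofReal (x ^ (if i = k then a else 0) * Real.exp (-(t * x))) with hF
            have hFmeas : ∀ i, Measurable (F i) := fun i =>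
              ((measurable_id'.pow_const _).mul
                ((measurable_id'.const_mul t).neg.exp)).ennreal_ofReal
            have step1 : ∫⁻ g, H g t ∂Pm =
                ENNReal.ofReal (t ^ (a-1)) * ∫⁻ g, ∏ i, F i (g i) ∂Pm := by
              rw [← lintegral_const_mul' _ _ ENNReal.ofReal_ne_top]
              refine lintegral_congr_ae ?_
              filter_upwards [hae] with g hg
              have hprod : ∏ i, F i (g i) =
                  ENNReal.ofReal (g k ^ a * Real.exp (-(t * ∑ j, g j))) := by
                simp only [hF]
                rw [← ENNReal.ofReal_prod_of_nonneg (fun i _ => by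
                  have := hg i; positivity)]
                congr 1
                rw [Finset.prod_mul_distrib]
                congr 1
                · rw [← Finset.mul_prod_erase univ _ (mem_univ k), if_pos rfl]
                  rw [Finset.prod_congr rfl (fun i hi => by
                    rw [if_neg (Finset.ne_of_mem_erase hi), Real.rpow_zero]),
                    Finset.prod_const_one, mul_one]
                · rw [← Real.exp_sum]
                  congr 1
                  rw [Finset.mul_sum]
                  simp
              rw [hprod, hH, ← ENNReal.ofReal_mul (by positivity)]
            rw [step1, lintegral_pi_prod n μ F hFmeas]
            have hval : ∀ i, ∫⁻ x, F i x ∂μ =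
                ENNReal.ofReal (Real.Gamma (α + (if i = k then a else 0)) /
                  (Real.Gamma α * (1+t) ^ (α + (if i = k then a else 0)))) := by
              intro i
              exact lint_moment hα (by split <;> linarith) ht'.le
            rw [Finset.prod_congr rfl fun i _ => hval i,
              ← ENNReal.ofReal_prod_of_nonneg (fun i _ => by positivity)]
            rw [← ENNReal.ofReal_mul (by positivity)]
            rw [← Finset.mul_prod_erase univ _ (mem_univ k), if_pos rfl]
            rw [Finset.prod_congr rfl (fun i hi => by rw [if_neg (Finset.ne_of_mem_erase hi)]),
              Finset.prod_const, Finset.card_erase_of_mem (mem_univ k), Finset.card_univ,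
              Fintype.card_fin]
            rw [add_zero]
            have e1 : Real.Gamma α / (Real.Gamma α * (1+t) ^ α) = ((1+t) ^ α)⁻¹ := by
              have := Real.rpow_pos_of_pos h1t α
              field_simp
            rw [e1, inv_pow, ← Real.rpow_natCast ((1+t) ^ α) (n-1), ← Real.rpow_mul h1t.le]
            have hcast : ((n-1 : ℕ) : ℝ) = (n:ℝ) - 1 := by
              rw [Nat.cast_sub hn]; simp
            rw [hcast]
            have hexp : (1+t) ^ (α+a) * (1+t) ^ (α * ((n:ℝ)-1)) = (1+t) ^ (a + (n:ℝ)*α) := by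
              rw [← Real.rpow_add h1t]; ring_nf
            have h2 : (0:ℝ) < (1+t) ^ (α+a) := Real.rpow_pos_of_pos h1t _
            have h3 : (0:ℝ) < (1+t) ^ (α*((n:ℝ)-1)) := Real.rpow_pos_of_pos h1t _
            have h4 : (0:ℝ) < (1+t) ^ (a + (n:ℝ)*α) := Real.rpow_pos_of_pos h1t _
            rw [← ENNReal.ofReal_mul (by positivity)]
            congr 1
            rw [← hexp]
            field_simp
        _ = ENNReal.ofReal (Real.Gamma (α+a) / Real.Gamma α) *
              ENNReal.ofReal (Real.Gamma a * Real.Gamma ((n:ℝ)*α) /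
                Real.Gamma (a + (n:ℝ)*α)) := by
            rw [lintegral_const_mul' _ _ ENNReal.ofReal_ne_top, lint_beta ha hnα]
    -- cancel Γ a
    have h1 : ENNReal.ofReal (Real.Gamma a) ≠ 0 := by simp [hΓa, not_le]
    rw [mul_comm] at key2
    rw [← ENNReal.eq_div_iff h1 ENNReal.ofReal_ne_top] at key2
    have hΓna : 0 < Real.Gamma (a + (n:ℝ)*α) := Real.Gamma_pos_of_pos (by linarith)
    rw [key2, ← ENNReal.ofReal_mul (by positivity), ← ENNReal.ofReal_div_of_pos hΓa]
    congr 1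
    rw [show (n:ℝ) * α + a = a + (n:ℝ) * α by ring]
    field_simp
  rw [key, ENNReal.toReal_ofReal (by positivity)]

lemma abs_mul_log_le_one {t : ℝ} (h0 : 0 < t) (h1 : t ≤ 1) : |t * Real.log t| ≤ 1 := by
  have hlog : Real.log t ≤ 0 := Real.log_nonpos h0.le h1
  have habs : |t * Real.log t| = t * -Real.log t := by
    rw [abs_of_nonpos (mul_nonpos_of_nonneg_of_nonpos h0.le hlog)]; ring
  rw [habs]
  have h2 : -Real.log t = Real.log t⁻¹ := (Real.log_inv t).symm
  have h3 : Real.log t⁻¹ ≤ t⁻¹ - 1 := Real.log_le_sub_one_of_pos (inv_pos.mpr h0)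
  have h4 : t * -Real.log t ≤ t * (t⁻¹ - 1) := by
    rw [h2]; exact mul_le_mul_of_nonneg_left h3 h0.le
  have h5 : t * (t⁻¹ - 1) = 1 - t := by field_simp
  linarith

lemma rpow_log_bound {p x : ℝ} (hp : 0 < p) (hp1 : p ≤ 1) (hx : 1/2 ≤ x) :
    |p ^ x * Real.log p| ≤ 2 := by
  have hq : 0 < p ^ (1/2 : ℝ) := Real.rpow_pos_of_pos hp _
  have hq1 : p ^ (1/2 : ℝ) ≤ 1 := Real.rpow_le_one hp.le hp1 (by norm_num)
  have hle : p ^ x ≤ p ^ (1/2 : ℝ) := Real.rpow_le_rpow_of_exponent_ge hp hp1 hx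
  have hsq : (p ^ (1/2:ℝ)) ^ (2:ℕ) = p := by
    rw [← Real.rpow_natCast (p ^ (1/2:ℝ)) 2, ← Real.rpow_mul hp.le]
    norm_num
  have hlog : |Real.log p| = 2 * |Real.log (p ^ (1/2:ℝ))| := by
    conv_lhs => rw [← hsq, Real.log_pow]
    rw [abs_mul]
    simp
  have h1 : |p ^ x * Real.log p| = p ^ x * |Real.log p| := by
    rw [abs_mul, abs_of_nonneg (Real.rpow_pos_of_pos hp x).le]
  rw [h1, hlog]
  have h2 : p ^ x * (2 * |Real.log (p ^ (1/2:ℝ))|) ≤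
      p ^ (1/2:ℝ) * (2 * |Real.log (p ^ (1/2:ℝ))|) := by
    apply mul_le_mul_of_nonneg_right hle (by positivity)
  have h3 : p ^ (1/2:ℝ) * (2 * |Real.log (p ^ (1/2:ℝ))|) =
      2 * |p ^ (1/2:ℝ) * Real.log (p ^ (1/2:ℝ))| := by
    rw [abs_mul, abs_of_nonneg hq.le]; ring
  have h4 := abs_mul_log_le_one hq hq1
  calc p ^ x * (2 * |Real.log (p ^ (1/2:ℝ))|) ≤ 2 * |p ^ (1/2:ℝ) * Real.log (p ^ (1/2:ℝ))| := by
        rw [← h3]; exact h2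
    _ ≤ 2 := by linarith

lemma entropy_term {n : ℕ} {α : ℝ} (hα : 0 < α) (k : Fin n) :
    ∫ g : Fin n → ℝ, (g k / ∑ j, g j) * Real.log (g k / ∑ j, g j)
        ∂(Measure.pi fun _ : Fin n => gammaMeasure α 1) =
      deriv (fun a : ℝ => Real.Gamma (α + a) * Real.Gamma (n*α) /
        (Real.Gamma α * Real.Gamma (n*α + a))) 1 := by
  have : IsProbabilityMeasure (gammaMeasure α 1) := isProbabilityMeasure_gammaMeasure hα one_pos
  set μ := gammaMeasure α 1 with hμ
  set Pm : Measure (Fin n → ℝ) := Measure.pi fun _ : Fin n => μ with hPm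
  have : IsProbabilityMeasure Pm := by rw [hPm]; infer_instance
  have hae : ∀ᵐ g ∂Pm, ∀ i, 0 < g i := pi_gamma_ae_pos hα
  have hSpos : ∀ g : Fin n → ℝ, (∀ i, 0 < g i) → 0 < ∑ j, g j := fun g hg =>
    Finset.sum_pos (fun j _ => hg j) ⟨k, mem_univ k⟩
  have hPle : ∀ g : Fin n → ℝ, (∀ i, 0 < g i) → g k / ∑ j, g j ≤ 1 := by
    intro g hg
    rw [div_le_one (hSpos g hg)]
    exact Finset.single_le_sum (fun j _ => (hg j).le) (mem_univ k)
  have hSmeas : Measurable (fun g : Fin n → ℝ => ∑ j, g j) :=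
    Finset.measurable_sum _ fun j _ => measurable_pi_apply j
  have hPdmeas : Measurable (fun g : Fin n → ℝ => g k / ∑ j, g j) :=
    (measurable_pi_apply k).div hSmeas
  set F : ℝ → (Fin n → ℝ) → ℝ := fun a g => (g k / ∑ j, g j) ^ a with hF
  set F' : ℝ → (Fin n → ℝ) → ℝ :=
    fun a g => (g k / ∑ j, g j) ^ a * Real.log (g k / ∑ j, g j) with hF'
  have hder := hasDerivAt_integral_of_dominated_loc_of_deriv_le
    (F := F) (F' := F') (μ := Pm) (x₀ := 1) (bound := fun _ => 2)
    (s := Metric.ball 1 (1/2)) (Metric.ball_mem_nhds _ (by norm_num))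
    (Filter.Eventually.of_forall fun a => (hPdmeas.pow_const a).aestronglyMeasurable)
    (by
      refine Integrable.mono' (integrable_const 1)
        (hPdmeas.pow_const 1).aestronglyMeasurable ?_
      filter_upwards [hae] with g hg
      have h0 := div_pos (hg k) (hSpos g hg)
      rw [Real.norm_eq_abs, abs_of_nonneg (Real.rpow_pos_of_pos h0 _).le]
      calc (g k / ∑ j, g j) ^ (1:ℝ) ≤ 1 ^ (1:ℝ) :=
            Real.rpow_le_rpow h0.le (hPle g hg) one_pos.le
        _ = 1 := Real.one_rpow 1)
    ((hPdmeas.pow_const 1).mul hPdmeas.log).aestronglyMeasurable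
    (by
      filter_upwards [hae] with g hg a haball
      have h0 := div_pos (hg k) (hSpos g hg)
      have h1 := hPle g hg
      have hax : 1/2 ≤ a := by
        rw [Metric.mem_ball, Real.dist_eq] at haball
        have := abs_lt.mp haball
        linarith [this.1]
      simpa [hF', Real.norm_eq_abs, ← abs_mul] using rpow_log_bound h0 h1 hax)
    (integrable_const 2)
    (by
      filter_upwards [hae] with g hg a _
      have h0 := div_pos (hg k) (hSpos g hg)
      set P := g k / ∑ j, g j with hP
      have hrw : (fun a : ℝ => P ^ a) = fun a => Real.exp (Real.log P * a) :=
        funext fun a => Real.rpow_def_of_pos h0 a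
      have hexp : HasDerivAt (fun y : ℝ => Real.exp (Real.log P * y))
          (Real.exp (Real.log P * a) * Real.log P) a := by
        simpa using HasDerivAt.exp ((hasDerivAt_id a).const_mul (Real.log P))
      have : HasDerivAt (fun a : ℝ => P ^ a) (Real.exp (Real.log P * a) * Real.log P) a := by
        rw [hrw]; exact hexp
      simpa [hF, hF', ← Real.rpow_def_of_pos h0] using this)
  obtain ⟨-, hder⟩ := hder
  have heq : (fun a : ℝ => ∫ g, F a g ∂Pm) =ᶠ[nhds 1]
      (fun a : ℝ => Real.Gamma (α + a) * Real.Gamma (n*α) /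
        (Real.Gamma α * Real.Gamma (n*α + a))) := by
    filter_upwards [Ioi_mem_nhds (zero_lt_one)] with a ha
    exact K_formula hα k ha
  have hderR := hder.congr_of_eventuallyEq heq.symm
  rw [hderR.deriv]
  refine integral_congr_ae (ae_of_all _ fun g => ?_)
  simp [hF', Real.rpow_one]

/-- Expected entropy of a symmetric Dirichlet distribution: if
`p = (p_1, ..., p_n)` is distributed as `Dirichlet(s/n, ..., s/n)` with total
concentration `s > 0` (constructed as independent `Gamma(s/n, 1)` variables
normalized by their sum), then `E[H(p)] = ψ(s + 1) − ψ(s/n + 1)`, where `H`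
is the Shannon entropy and `ψ` is the digamma function
`ψ = (log ∘ Γ)'`. -/
theorem dirichlet_expected_entropy (n : ℕ) (hn : 0 < n) (s : ℝ) (hs : 0 < s) :
    ∫ p : Fin n → ℝ,
        (-∑ k : Fin n, p k * Real.log (p k))
      ∂(Measure.map
          (fun g : Fin n → ℝ => fun i : Fin n => g i / ∑ j : Fin n, g j)
          (Measure.pi (fun _ : Fin n => gammaMeasure (s / n) 1))) =
      deriv (fun x : ℝ => Real.log (Real.Gamma x)) (s + 1) -
        deriv (fun x : ℝ => Real.log (Real.Gamma x)) (s / n + 1) := by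
  have hn' : (0:ℝ) < n := Nat.cast_pos.mpr hn
  set α : ℝ := s / n with hαdef
  have hα : 0 < α := div_pos hs hn'
  have hns : (n:ℝ) * α = s := by rw [hαdef]; field_simp [hn'.ne']
  have : IsProbabilityMeasure (gammaMeasure α 1) := isProbabilityMeasure_gammaMeasure hα one_pos
  set μ := gammaMeasure α 1 with hμ
  set Pm : Measure (Fin n → ℝ) := Measure.pi fun _ : Fin n => μ with hPm
  have hprob : IsProbabilityMeasure Pm := by rw [hPm]; infer_instance
  have hae : ∀ᵐ g ∂Pm, ∀ i, 0 < g i := pi_gamma_ae_pos hα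
  have hSmeas : Measurable (fun g : Fin n → ℝ => ∑ j, g j) :=
    Finset.measurable_sum _ fun j _ => measurable_pi_apply j
  have hφmeas : Measurable (fun g : Fin n → ℝ => fun i : Fin n => g i / ∑ j : Fin n, g j) :=
    measurable_pi_lambda _ fun i => (measurable_pi_apply i).div hSmeas
  have hfmeas : Measurable (fun p : Fin n → ℝ => -∑ k : Fin n, p k * Real.log (p k)) :=
    (Finset.measurable_sum _ fun k _ =>
      (measurable_pi_apply k).mul (measurable_pi_apply k).log).neg
  rw [integral_map hφmeas.aemeasurable hfmeas.aestronglyMeasurable]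
  simp only []
  have hint : ∀ k ∈ (univ : Finset (Fin n)), Integrable
      (fun g : Fin n → ℝ => (g k / ∑ j, g j) * Real.log (g k / ∑ j, g j)) Pm := by
    intro k _
    refine Integrable.mono' (integrable_const 1)
      (((measurable_pi_apply k).div hSmeas).mul
        ((measurable_pi_apply k).div hSmeas).log).aestronglyMeasurable ?_
    filter_upwards [hae] with g hg
    have hS : 0 < ∑ j, g j := Finset.sum_pos (fun j _ => hg j) ⟨k, mem_univ k⟩
    have h0 := div_pos (hg k) hS
    have h1 : g k / ∑ j, g j ≤ 1 := by
      rw [div_le_one hS]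
      exact Finset.single_le_sum (fun j _ => (hg j).le) (mem_univ k)
    rw [Real.norm_eq_abs]
    exact abs_mul_log_le_one h0 h1
  rw [integral_neg, integral_finset_sum univ hint]
  have hterm : ∀ k : Fin n,
      ∫ g : Fin n → ℝ, (g k / ∑ j, g j) * Real.log (g k / ∑ j, g j) ∂Pm =
        deriv (fun a : ℝ => Real.Gamma (α + a) * Real.Gamma (n*α) /
          (Real.Gamma α * Real.Gamma (n*α + a))) 1 := fun k => entropy_term hα k
  rw [Finset.sum_congr rfl fun k _ => hterm k, Finset.sum_const, Finset.card_univ,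
    Fintype.card_fin, nsmul_eq_mul]
  -- compute the derivative
  have hneg : ∀ (x:ℝ), 0 < x → ∀ m:ℕ, x ≠ -(m:ℝ) := by
    intro x hx m hcon
    have h0 : (0:ℝ) ≤ (m:ℝ) := Nat.cast_nonneg m
    rw [hcon] at hx
    linarith
  have hΓα : 0 < Real.Gamma α := Real.Gamma_pos_of_pos hα
  have hΓnα : 0 < Real.Gamma ((n:ℝ)*α) := Real.Gamma_pos_of_pos (by positivity)
  have hΓα1 : 0 < Real.Gamma (α+1) := Real.Gamma_pos_of_pos (by linarith)
  have hΓnα1 : 0 < Real.Gamma ((n:ℝ)*α+1) := Real.Gamma_pos_of_pos (by positivity)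
  have hdiffα : DifferentiableAt ℝ Real.Gamma (α+1) :=
    Real.differentiableAt_Gamma (hneg _ (by linarith))
  have hdiffnα : DifferentiableAt ℝ Real.Gamma ((n:ℝ)*α+1) :=
    Real.differentiableAt_Gamma (hneg _ (by positivity))
  have hd1 : HasDerivAt (fun a : ℝ => Real.Gamma (α + a)) (deriv Real.Gamma (α+1)) 1 := by
    have hinner : HasDerivAt (fun a : ℝ => α + a) 1 1 := by
      simpa using (hasDerivAt_id (1:ℝ)).const_add α
    simpa [Function.comp_def] using (hdiffα.hasDerivAt.comp 1 hinner)
  have hd2 : HasDerivAt (fun a : ℝ => Real.Gamma ((n:ℝ)*α + a))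
      (deriv Real.Gamma ((n:ℝ)*α+1)) 1 := by
    have hinner : HasDerivAt (fun a : ℝ => (n:ℝ)*α + a) 1 1 := by
      simpa using (hasDerivAt_id (1:ℝ)).const_add ((n:ℝ)*α)
    simpa [Function.comp_def] using (hdiffnα.hasDerivAt.comp 1 hinner)
  have hden_ne : Real.Gamma α * Real.Gamma ((n:ℝ)*α+1) ≠ 0 := by positivity
  have hR : HasDerivAt (fun a : ℝ => Real.Gamma (α + a) * Real.Gamma ((n:ℝ)*α) /
      (Real.Gamma α * Real.Gamma ((n:ℝ)*α + a)))
      ((deriv Real.Gamma (α+1) * Real.Gamma ((n:ℝ)*α) *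
          (Real.Gamma α * Real.Gamma ((n:ℝ)*α+1)) -
        Real.Gamma (α+1) * Real.Gamma ((n:ℝ)*α) *
          (Real.Gamma α * deriv Real.Gamma ((n:ℝ)*α+1))) /
        (Real.Gamma α * Real.Gamma ((n:ℝ)*α+1))^2) 1 :=
    (hd1.mul_const _).div (hd2.const_mul _) hden_ne
  rw [hR.deriv]
  -- digamma values
  have hψs : deriv (fun x : ℝ => Real.log (Real.Gamma x)) (s+1) =
      deriv Real.Gamma (s+1) / Real.Gamma (s+1) := by
    have hdiff : DifferentiableAt ℝ Real.Gamma (s+1) :=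
      Real.differentiableAt_Gamma (hneg _ (by linarith))
    exact (hdiff.hasDerivAt.log (Real.Gamma_pos_of_pos (by linarith)).ne').deriv
  have hψα : deriv (fun x : ℝ => Real.log (Real.Gamma x)) (s/(n:ℝ)+1) =
      deriv Real.Gamma (α+1) / Real.Gamma (α+1) := by
    have hdiff : DifferentiableAt ℝ Real.Gamma (α+1) :=
      Real.differentiableAt_Gamma (hneg _ (by linarith))
    have := (hdiff.hasDerivAt.log hΓα1.ne').deriv
    rw [← hαdef] at *
    exact this
  rw [hψs, hψα, ← hns]
  have hG1 : Real.Gamma (α+1) = α * Real.Gamma α := Real.Gamma_add_one hα.ne'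
  have hG2 : Real.Gamma ((n:ℝ)*α+1) = ((n:ℝ)*α) * Real.Gamma ((n:ℝ)*α) :=
    Real.Gamma_add_one (by positivity)
  rw [hG1, hG2]
  have hαne : α ≠ 0 := hα.ne'
  have hnne : (n:ℝ) ≠ 0 := hn'.ne'
  field_simp
  ring
end

section
/- Digamma asymptotic bound: for all x ≥ 1, |ψ(x) − (log x − 1/(2x))| ≤ 1/(12x²), where ψ is the digamma function. -/
open Real Filter Set Topology

private lemma hasDerivAt_funA {z : ℝ} (hz : 0 < z) :
    HasDerivAt (fun y : ℝ => 1/(2*y) + 1/(2*(y+1)) - (Real.log (y+1) - Real.log y))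
      (-1/(2*z^2*(z+1)^2)) z := by
  have hz1 : (0:ℝ) < z + 1 := by linarith
  have h2z : HasDerivAt (fun w : ℝ => 2*w) 2 z := by
    simpa using (hasDerivAt_id z).const_mul (2:ℝ)
  have h2z1 : HasDerivAt (fun w : ℝ => 2*(w+1)) 2 z := by
    simpa using ((hasDerivAt_id z).add_const 1).const_mul (2:ℝ)
  have hA := h2z.inv (by positivity)
  have hB := h2z1.inv (by positivity)
  have hC : HasDerivAt (fun w : ℝ => Real.log (w+1)) ((z+1)⁻¹) z := by
    simpa [Function.comp_def] using (Real.hasDerivAt_log hz1.ne').comp z ((hasDerivAt_id z).add_const 1)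
  have hD := Real.hasDerivAt_log hz.ne'
  have : HasDerivAt (fun y : ℝ => (2*y)⁻¹ + (2*(y+1))⁻¹ - (Real.log (y+1) - Real.log y)) _ z :=
    (hA.add hB).sub (hC.sub hD)
  have hne : z ≠ 0 := hz.ne'
  have hne1 : z + 1 ≠ 0 := hz1.ne'
  simp only [one_div]
  convert this using 1
  field_simp
  ring

private lemma hasDerivAt_funB {z : ℝ} (hz : 0 < z) :
    HasDerivAt (fun y : ℝ => (Real.log (y+1) - Real.log y) - 1/(2*y) - 1/(2*(y+1))
        + (1/12) * (1/y^2 - 1/(y+1)^2))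
      (-1/(6*z^3*(z+1)^3)) z := by
  have hz1 : (0:ℝ) < z + 1 := by linarith
  have hne : z ≠ 0 := hz.ne'
  have hne1 : z + 1 ≠ 0 := hz1.ne'
  have h2z : HasDerivAt (fun w : ℝ => 2*w) 2 z := by
    simpa using (hasDerivAt_id z).const_mul (2:ℝ)
  have h2z1 : HasDerivAt (fun w : ℝ => 2*(w+1)) 2 z := by
    simpa using ((hasDerivAt_id z).add_const 1).const_mul (2:ℝ)
  have hA := h2z.inv (by positivity)
  have hB := h2z1.inv (by positivity)
  have hC : HasDerivAt (fun w : ℝ => Real.log (w+1)) ((z+1)⁻¹) z := by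
    simpa [Function.comp_def] using (Real.hasDerivAt_log hz1.ne').comp z ((hasDerivAt_id z).add_const 1)
  have hD := Real.hasDerivAt_log hz.ne'
  have hE := (hasDerivAt_pow 2 z).inv (by positivity)
  have hF : HasDerivAt (fun w : ℝ => (w+1)^2) (2*(z+1)) z := by
    simpa [Function.comp_def, Pi.pow_def] using ((hasDerivAt_id z).add_const 1).pow 2
  have hF' := hF.inv (by positivity)
  norm_num at hE hF'
  have key := (((hC.sub hD).sub hA).sub hB).add ((hE.sub hF').const_mul (1/12 : ℝ))
  have h2 : (z + 1)⁻¹ - z⁻¹ - -2 / (2 * z) ^ 2 - -2 / (2 * (z + 1)) ^ 2 +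
      1 / 12 * (-(2 * z) / (z ^ 2) ^ 2 - -(2 * (z + 1)) / ((z + 1) ^ 2) ^ 2)
      = -1/(6*z^3*(z+1)^3) := by
    field_simp
    ring
  rw [h2] at key
  have key' : HasDerivAt (fun y : ℝ => Real.log (y+1) - Real.log y - (2*y)⁻¹ - (2*(y+1))⁻¹
      + 1/12 * ((y^2)⁻¹ - ((y+1)^2)⁻¹)) (-1/(6*z^3*(z+1)^3)) z := key
  simpa [one_div] using key'

private lemma tendsto_half_inv : Tendsto (fun w : ℝ => 1/(2*w)) atTop (𝓝 0) := by
  have h : Tendsto (fun w : ℝ => 2*w) atTop atTop := tendsto_id.const_mul_atTop two_pos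
  exact h.inv_tendsto_atTop.congr fun w => by simp [one_div]

private lemma tendsto_half_inv_shift : Tendsto (fun w : ℝ => 1/(2*(w+1))) atTop (𝓝 0) := by
  have h : Tendsto (fun w : ℝ => 2*(w+1)) atTop atTop :=
    (tendsto_atTop_add_const_right atTop 1 tendsto_id).const_mul_atTop two_pos
  exact h.inv_tendsto_atTop.congr fun w => by simp [one_div]

private lemma tendsto_log_diff : Tendsto (fun w : ℝ => Real.log (w+1) - Real.log w) atTop (𝓝 0) := by
  have e : (fun w : ℝ => Real.log (w+1) - Real.log w) =ᶠ[atTop] fun w => Real.log ((w+1)/w) := by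
    filter_upwards [eventually_gt_atTop (0:ℝ)] with w hw
    rw [Real.log_div (by linarith) hw.ne']
  have l4 : Tendsto (fun w : ℝ => (w+1)/w) atTop (𝓝 1) := by
    have e2 : (fun w : ℝ => (w+1)/w) =ᶠ[atTop] fun w => 1 + w⁻¹ := by
      filter_upwards [eventually_gt_atTop (0:ℝ)] with w hw
      field_simp
    rw [tendsto_congr' e2]
    have := ((tendsto_const_nhds : Tendsto (fun _ : ℝ => (1:ℝ)) atTop (𝓝 1)).add
      tendsto_inv_atTop_zero)
    simpa using this
  have l5 : Tendsto Real.log (𝓝 1) (𝓝 0) := by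
    simpa using (Real.continuousAt_log one_ne_zero).tendsto
  rw [tendsto_congr' e]
  exact l5.comp l4

private lemma tendsto_inv_sq : Tendsto (fun w : ℝ => 1/w^2) atTop (𝓝 0) := by
  exact (tendsto_pow_atTop two_ne_zero).inv_tendsto_atTop.congr fun w => by simp [one_div]

private lemma tendsto_inv_sq_shift : Tendsto (fun w : ℝ => 1/(w+1)^2) atTop (𝓝 0) := by
  have h : Tendsto (fun w : ℝ => (w+1)^2) atTop atTop :=
    (tendsto_pow_atTop (two_ne_zero)).comp (tendsto_atTop_add_const_right atTop 1 tendsto_id)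
  exact h.inv_tendsto_atTop.congr fun w => by simp [one_div]

private lemma funA_nonneg {y : ℝ} (hy : 1 ≤ y) :
    Real.log (y+1) - Real.log y ≤ 1/(2*y) + 1/(2*(y+1)) := by
  set f : ℝ → ℝ := fun w => 1/(2*w) + 1/(2*(w+1)) - (Real.log (w+1) - Real.log w) with hf
  have hanti : AntitoneOn f (Ici 1) := by
    refine antitoneOn_of_hasDerivWithinAt_nonpos (convex_Ici 1)
      (fun z hz => ?_) (f' := fun z => -1/(2*z^2*(z+1)^2)) (fun z hz => ?_) (fun z hz => ?_)
    · have hz0 : (0:ℝ) < z := lt_of_lt_of_le one_pos hz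
      exact (hasDerivAt_funA hz0).continuousAt.continuousWithinAt
    · rw [interior_Ici] at hz
      exact (hasDerivAt_funA (lt_trans one_pos hz)).hasDerivWithinAt
    · rw [interior_Ici] at hz
      have h1 : (0:ℝ) < 2*z^2*(z+1)^2 := by
        have : (0:ℝ) < z := lt_trans one_pos hz
        positivity
      exact div_nonpos_of_nonpos_of_nonneg (by norm_num) h1.le
  have hlim : Tendsto f atTop (𝓝 0) := by
    have := (tendsto_half_inv.add tendsto_half_inv_shift).sub tendsto_log_diff
    simpa only [add_zero, zero_add, sub_zero] using this
  have h0 : 0 ≤ f y :=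
    le_of_tendsto hlim (eventually_atTop.2 ⟨y, fun z hz => hanti hy (le_trans hy hz) hz⟩)
  simp only [hf] at h0
  linarith

private lemma funB_nonneg {y : ℝ} (hy : 1 ≤ y) :
    1/(2*y) + 1/(2*(y+1)) - (1/12) * (1/y^2 - 1/(y+1)^2) ≤ Real.log (y+1) - Real.log y := by
  set f : ℝ → ℝ := fun w => (Real.log (w+1) - Real.log w) - 1/(2*w) - 1/(2*(w+1))
      + (1/12) * (1/w^2 - 1/(w+1)^2) with hf
  have hanti : AntitoneOn f (Ici 1) := by
    refine antitoneOn_of_hasDerivWithinAt_nonpos (convex_Ici 1)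
      (fun z hz => ?_) (f' := fun z => -1/(6*z^3*(z+1)^3)) (fun z hz => ?_) (fun z hz => ?_)
    · have hz0 : (0:ℝ) < z := lt_of_lt_of_le one_pos hz
      exact (hasDerivAt_funB hz0).continuousAt.continuousWithinAt
    · rw [interior_Ici] at hz
      exact (hasDerivAt_funB (lt_trans one_pos hz)).hasDerivWithinAt
    · rw [interior_Ici] at hz
      have h1 : (0:ℝ) < 6*z^3*(z+1)^3 := by
        have : (0:ℝ) < z := lt_trans one_pos hz
        positivity
      exact div_nonpos_of_nonpos_of_nonneg (by norm_num) h1.le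
  have hlim : Tendsto f atTop (𝓝 0) := by
    have := ((tendsto_log_diff.sub tendsto_half_inv).sub tendsto_half_inv_shift).add
      ((tendsto_inv_sq.sub tendsto_inv_sq_shift).const_mul (1/12 : ℝ))
    simpa only [sub_zero, mul_zero, add_zero] using this
  have h0 : 0 ≤ f y :=
    le_of_tendsto hlim (eventually_atTop.2 ⟨y, fun z hz => hanti hy (le_trans hy hz) hz⟩)
  simp only [hf] at h0
  linarith

noncomputable def psiFun : ℝ → ℝ := deriv (fun y : ℝ => Real.log (Real.Gamma y))

private lemma logGamma_diffAt {x : ℝ} (hx : 0 < x) :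
    DifferentiableAt ℝ (fun y : ℝ => Real.log (Real.Gamma y)) x := by
  have h : ∀ m : ℕ, x ≠ -(m : ℝ) := by
    intro m hm
    have h0 : (0:ℝ) ≤ (m:ℝ) := m.cast_nonneg
    rw [hm] at hx
    linarith
  exact (Real.differentiableAt_Gamma h).log (Real.Gamma_pos_of_pos hx).ne'

private lemma hasDerivAt_psi {x : ℝ} (hx : 0 < x) :
    HasDerivAt (fun y : ℝ => Real.log (Real.Gamma y)) (psiFun x) x :=
  (logGamma_diffAt hx).hasDerivAt

private lemma psi_succ {x : ℝ} (hx : 0 < x) : psiFun (x+1) = psiFun x + 1/x := by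
  have h1 : HasDerivAt (fun y : ℝ => Real.log (Real.Gamma (y+1))) (psiFun (x+1)) x := by
    simpa [Function.comp_def] using (hasDerivAt_psi (by linarith : (0:ℝ) < x + 1)).comp x
      ((hasDerivAt_id x).add_const 1)
  have h2 : HasDerivAt (fun y : ℝ => Real.log (Real.Gamma y) + Real.log y)
      (psiFun x + 1/x) x := by
    simpa [one_div, Pi.add_def] using (hasDerivAt_psi hx).add (Real.hasDerivAt_log hx.ne')
  have heq : (fun y : ℝ => Real.log (Real.Gamma (y+1)))
      =ᶠ[𝓝 x] fun y => Real.log (Real.Gamma y) + Real.log y := by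
    filter_upwards [Ioi_mem_nhds hx] with y hy
    rw [Real.Gamma_add_one (ne_of_gt hy),
      Real.log_mul (ne_of_gt hy) (Real.Gamma_pos_of_pos hy).ne']
    ring
  exact h1.unique (h2.congr_of_eventuallyEq heq)

private lemma psi_add_nat {x : ℝ} (hx : 0 < x) (n : ℕ) :
    psiFun (x + n) = psiFun x + ∑ k ∈ Finset.range n, 1/(x + k) := by
  induction n with
  | zero => simp
  | succ n ih =>
    have hxn : 0 < x + n := by positivity
    have h := psi_succ hxn
    have hc : x + ((n:ℝ) + 1) = (x + n) + 1 := by ring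
    push_cast
    rw [hc, h, ih, Finset.sum_range_succ]
    ring

private lemma psi_le_log {z : ℝ} (hz : 0 < z) : psiFun z ≤ Real.log z := by
  have h := Real.convexOn_log_Gamma.deriv_le_slope (Set.mem_Ioi.2 hz)
    (Set.mem_Ioi.2 (by linarith : (0:ℝ) < z + 1)) (lt_add_one z) (logGamma_diffAt hz)
  rw [slope_def_field] at h
  have hg : Real.Gamma (z+1) = z * Real.Gamma z := Real.Gamma_add_one hz.ne'
  have : (Real.log ∘ Real.Gamma) (z+1) - (Real.log ∘ Real.Gamma) z = Real.log z := by
    simp only [Function.comp_apply, hg,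
      Real.log_mul hz.ne' (Real.Gamma_pos_of_pos hz).ne']
    ring
  rw [this] at h
  simpa [psiFun, Function.comp_def] using h

private lemma log_le_psi_succ {z : ℝ} (hz : 0 < z) : Real.log z ≤ psiFun (z+1) := by
  have h := Real.convexOn_log_Gamma.slope_le_deriv (Set.mem_Ioi.2 hz)
    (Set.mem_Ioi.2 (by linarith : (0:ℝ) < z + 1)) (lt_add_one z)
    (logGamma_diffAt (by linarith : (0:ℝ) < z + 1))
  rw [slope_def_field] at h
  have hg : Real.Gamma (z+1) = z * Real.Gamma z := Real.Gamma_add_one hz.ne'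
  have : (Real.log ∘ Real.Gamma) (z+1) - (Real.log ∘ Real.Gamma) z = Real.log z := by
    simp only [Function.comp_apply, hg,
      Real.log_mul hz.ne' (Real.Gamma_pos_of_pos hz).ne']
    ring
  rw [this] at h
  simpa [psiFun, Function.comp_def] using h

private noncomputable def Tx (x : ℝ) (n : ℕ) : ℝ :=
  Real.log (x + n) - Real.log x - (∑ k ∈ Finset.range n, 1/(x + k))
    + 1/(2*x) - 1/(2*(x + n))

/-- Digamma asymptotic bound: for all `x ≥ 1`,
`|ψ(x) − (log x − 1/(2x))| ≤ 1/(12 x²)`, where `ψ = (log ∘ Γ)'` is the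
digamma function. -/
theorem digamma_asymptotic_bound (x : ℝ) (hx : 1 ≤ x) :
    |deriv (fun y : ℝ => Real.log (Real.Gamma y)) x -
        (Real.log x - 1 / (2 * x))| ≤ 1 / (12 * x ^ 2) := by
  have hx0 : (0:ℝ) < x := lt_of_lt_of_le one_pos hx
  show |psiFun x - (Real.log x - 1 / (2 * x))| ≤ 1 / (12 * x ^ 2)
  have hxn : ∀ n : ℕ, (0:ℝ) < x + n := fun n => by positivity
  have hxn1 : ∀ n : ℕ, (1:ℝ) ≤ x + n := fun n => by
    have : (0:ℝ) ≤ (n:ℝ) := n.cast_nonneg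
    linarith
  -- step identity for T
  have hstep : ∀ n : ℕ, Tx x (n+1) = Tx x n + (Real.log ((x+n)+1) - Real.log (x+n))
      - 1/(x+n) + 1/(2*(x+n)) - 1/(2*((x+n)+1)) := by
    intro n
    simp only [Tx, Finset.sum_range_succ]
    push_cast
    rw [show x + ((n:ℝ)+1) = x + (n:ℝ) + 1 from by ring]
    ring
  -- bounds on T by induction
  have hTb : ∀ n : ℕ, -(1/12) * (1/x^2 - 1/(x + n)^2) ≤ Tx x n ∧ Tx x n ≤ 0 := by
    intro n
    induction n with
    | zero =>
      constructor <;> simp [Tx]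
    | succ n ih =>
      have hy : (1:ℝ) ≤ x + n := hxn1 n
      have hA := funA_nonneg hy
      have hB := funB_nonneg hy
      have e1 : 1/(x+(n:ℝ)) = 2 * (1/(2*(x+(n:ℝ)))) := by
        have := hxn n
        field_simp
      have hst := hstep n
      have hcast : ((n+1 : ℕ) : ℝ) = (n:ℝ) + 1 := by push_cast; ring
      constructor
      · rw [hst]
        push_cast
        rw [show x + ((n:ℝ)+1) = x + (n:ℝ) + 1 from by ring]
        linarith [ih.1, hB, e1]
      · rw [hst]
        linarith [ih.2, hA, e1]
  -- relation between psi and T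
  have hEeq : ∀ n : ℕ, psiFun x - (Real.log x - 1/(2*x))
      = Tx x n + (psiFun (x+n) - Real.log (x+n) + 1/(2*(x+n))) := by
    intro n
    have hp := psi_add_nat hx0 n
    simp only [Tx]
    linarith
  -- upper bound for each n
  have hupper : ∀ n : ℕ, psiFun x - (Real.log x - 1/(2*x)) ≤ 1/(2*(x+n)) := by
    intro n
    have h1 := (hTb n).2
    have h2 := psi_le_log (hxn n)
    have h3 := hEeq n
    linarith
  -- lower bound for each n
  have hlower : ∀ n : ℕ, -(1/(12*x^2)) - 1/(x+n) ≤ psiFun x - (Real.log x - 1/(2*x)) := by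
    intro n
    have h1 := (hTb (n+1)).1
    have h2 := log_le_psi_succ (hxn n)
    have h3 : Real.log ((x+(n:ℝ))+1) - Real.log (x+(n:ℝ)) ≤ 1/(x+(n:ℝ)) := by
      have hpos := hxn n
      have hq : (0:ℝ) < ((x+(n:ℝ))+1)/(x+(n:ℝ)) := by positivity
      have hl := Real.log_le_sub_one_of_pos hq
      rw [Real.log_div (by positivity : (0:ℝ) < (x+(n:ℝ))+1).ne' hpos.ne'] at hl
      have he : ((x+(n:ℝ))+1)/(x+(n:ℝ)) - 1 = 1/(x+(n:ℝ)) := by field_simp; ring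
      linarith [he ▸ hl]
    have h4 := hEeq (n+1)
    have hcast : ((n+1 : ℕ) : ℝ) = (n:ℝ) + 1 := by push_cast; ring
    rw [hcast, show x + ((n:ℝ)+1) = x + (n:ℝ) + 1 from by ring] at h1 h4
    have e2 : 1/(12*x^2) = (1/12)*(1/x^2) := by ring
    have p1 : (0:ℝ) ≤ 1/(2*(x+(n:ℝ)+1)) := by positivity
    have p2 : (0:ℝ) ≤ 1/(x+(n:ℝ)+1)^2 := by positivity
    linarith
  -- limits
  have hb : Tendsto (fun n : ℕ => x + (n:ℝ)) atTop atTop :=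
    tendsto_atTop_add_const_left atTop x tendsto_natCast_atTop_atTop
  have hTend1 : Tendsto (fun n : ℕ => 1/(2*(x+(n:ℝ)))) atTop (𝓝 0) :=
    (hb.const_mul_atTop two_pos).inv_tendsto_atTop.congr fun n => by simp [one_div]
  have hTend2 : Tendsto (fun n : ℕ => 1/(x+(n:ℝ))) atTop (𝓝 0) :=
    hb.inv_tendsto_atTop.congr fun n => by simp [one_div]
  have hup : psiFun x - (Real.log x - 1/(2*x)) ≤ 0 :=
    ge_of_tendsto hTend1 (Filter.Eventually.of_forall hupper)
  have hlo : -(1/(12*x^2)) ≤ psiFun x - (Real.log x - 1/(2*x)) := by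
    have hT3 : Tendsto (fun n : ℕ => -(1/(12*x^2)) - 1/(x+(n:ℝ))) atTop
        (𝓝 (-(1/(12*x^2)))) := by
      simpa only [sub_zero] using tendsto_const_nhds.sub hTend2
    exact le_of_tendsto hT3 (Filter.Eventually.of_forall hlower)
  have hpos : (0:ℝ) < 1/(12*x^2) := by positivity
  rw [abs_le]
  constructor <;> linarith
end
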